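/- arXiv:1805.03231 — 4 statements merged into one kernel-verified Lean document; each statement's English description precedes it below -/
import Mathlib

section
/- Let A ∈ B(H₁), D ∈ B(H₂) and let T = [[A, 0], [0, D]] act on H₁ ⊕ H₂. If ber is defined with respect to the family of unit vectors k_{(λ₁,λ₂)} formed by normalizing k_{λ₁} ⊕ k_{λ₂} from families of reproducing kernels on H₁ and H₂, then ber(T) ≤ max{ber(A), ber(D)}. -/
open scoped InnerProductSpace
open ContinuousLinearMap Complex

variable {H₁ H₂ : Type*}
  [NormedAddCommGroup H₁] [InnerProductSpace ℂ H₁] [CompleteSpace H₁]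
  [NormedAddCommGroup H₂] [InnerProductSpace ℂ H₂] [CompleteSpace H₂]

/-- `T ^ e` for a (positive) operator `T`, via the continuous functional calculus. -/
noncomputable def opow {E : Type*} [NormedAddCommGroup E] [InnerProductSpace ℂ E]
    [CompleteSpace E] (T : E →L[ℂ] E) (e : ℝ) : E →L[ℂ] E :=
  cfc (fun t : ℝ => t ^ e) T

/-- The absolute value `|T| = (T*T)^(1/2)` of an operator between Hilbert spaces. -/
noncomputable def oabs {E F : Type*} [NormedAddCommGroup E] [InnerProductSpace ℂ E]
    [CompleteSpace E] [NormedAddCommGroup F] [InnerProductSpace ℂ F] [CompleteSpace F]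
    (T : E →L[ℂ] F) : E →L[ℂ] E :=
  cfc Real.sqrt ((ContinuousLinearMap.adjoint T).comp T)

private lemma aux_norm_inner_smul {E : Type*} [NormedAddCommGroup E] [InnerProductSpace ℂ E]
    (T : E →L[ℂ] E) (x : E) (c : ℝ) :
    ‖⟪T (c • x), c • x⟫_ℂ‖ = c ^ 2 * ‖⟪T x, x⟫_ℂ‖ := by
  rw [RCLike.real_smul_eq_coe_smul (K := ℂ) c x, map_smul, inner_smul_left,
    inner_smul_right]
  rw [norm_mul, norm_mul, RCLike.norm_conj, RCLike.norm_ofReal,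
    ← mul_assoc, abs_mul_abs_self, sq]


private lemma aux_bdd {E : Type*} [NormedAddCommGroup E] [InnerProductSpace ℂ E]
    {ι : Type*} (T : E →L[ℂ] E) (κ : ι → E) (hκ : ∀ i, κ i ≠ 0) :
    BddAbove (Set.range fun i => ‖⟪T (‖κ i‖⁻¹ • κ i), ‖κ i‖⁻¹ • κ i⟫_ℂ‖) := by
  refine ⟨‖T‖, ?_⟩
  rintro _ ⟨i, rfl⟩
  calc ‖⟪T (‖κ i‖⁻¹ • κ i), ‖κ i‖⁻¹ • κ i⟫_ℂ‖
      ≤ ‖T (‖κ i‖⁻¹ • κ i)‖ * ‖‖κ i‖⁻¹ • κ i‖ := norm_inner_le_norm _ _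
    _ ≤ ‖T‖ * ‖‖κ i‖⁻¹ • κ i‖ * ‖‖κ i‖⁻¹ • κ i‖ := by
        gcongr; exact T.le_opNorm _
    _ = ‖T‖ := by
        have h1 : ‖‖κ i‖⁻¹ • κ i‖ = 1 := by
          rw [norm_smul, norm_inv, norm_norm,
            inv_mul_cancel₀ (norm_ne_zero_iff.mpr (hκ i))]
        rw [h1]; ring

/-- Berezin number of a block-diagonal operator on `H₁ ⊕ H₂` with respect to the
normalized reproducing kernels `(κ₁ i, κ₂ j)/‖(κ₁ i, κ₂ j)‖`: the value of the Berezin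
symbol of `diag(A, D)` at such a kernel is
`⟪A u, u⟫ + ⟪D v, v⟫` where `(u, v)` is the normalized kernel. -/
theorem berezin_block_diagonal {ι₁ ι₂ : Type*}
    (κ₁ : ι₁ → H₁) (κ₂ : ι₂ → H₂) (hκ₁ : ∀ i, κ₁ i ≠ 0) (hκ₂ : ∀ j, κ₂ j ≠ 0)
    (A : H₁ →L[ℂ] H₁) (D : H₂ →L[ℂ] H₂) :
    (⨆ p : ι₁ × ι₂,
        ‖⟪A ((Real.sqrt (‖κ₁ p.1‖ ^ 2 + ‖κ₂ p.2‖ ^ 2))⁻¹ • κ₁ p.1),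
            (Real.sqrt (‖κ₁ p.1‖ ^ 2 + ‖κ₂ p.2‖ ^ 2))⁻¹ • κ₁ p.1⟫_ℂ +
          ⟪D ((Real.sqrt (‖κ₁ p.1‖ ^ 2 + ‖κ₂ p.2‖ ^ 2))⁻¹ • κ₂ p.2),
            (Real.sqrt (‖κ₁ p.1‖ ^ 2 + ‖κ₂ p.2‖ ^ 2))⁻¹ • κ₂ p.2⟫_ℂ‖) ≤
      max (⨆ i, ‖⟪A (‖κ₁ i‖⁻¹ • κ₁ i), ‖κ₁ i‖⁻¹ • κ₁ i⟫_ℂ‖)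
        (⨆ j, ‖⟪D (‖κ₂ j‖⁻¹ • κ₂ j), ‖κ₂ j‖⁻¹ • κ₂ j⟫_ℂ‖) := by
  have hS₁nn : (0:ℝ) ≤ ⨆ i, ‖⟪A (‖κ₁ i‖⁻¹ • κ₁ i), ‖κ₁ i‖⁻¹ • κ₁ i⟫_ℂ‖ :=
    Real.iSup_nonneg fun _ => norm_nonneg _
  rcases isEmpty_or_nonempty (ι₁ × ι₂) with h | h
  · rw [Real.iSup_of_isEmpty]
    exact le_max_of_le_left hS₁nn
  apply ciSup_le
  intro p
  set a := ‖κ₁ p.1‖ with ha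
  set b := ‖κ₂ p.2‖ with hb
  have ha0 : 0 < a := norm_pos_iff.mpr (hκ₁ p.1)
  have hb0 : 0 < b := norm_pos_iff.mpr (hκ₂ p.2)
  have hs0 : 0 < a ^ 2 + b ^ 2 := by positivity
  set s := Real.sqrt (a ^ 2 + b ^ 2) with hs
  have hs2 : s ^ 2 = a ^ 2 + b ^ 2 := Real.sq_sqrt hs0.le
  have hspos : 0 < s := Real.sqrt_pos.mpr hs0
  set M := max (⨆ i, ‖⟪A (‖κ₁ i‖⁻¹ • κ₁ i), ‖κ₁ i‖⁻¹ • κ₁ i⟫_ℂ‖)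
      (⨆ j, ‖⟪D (‖κ₂ j‖⁻¹ • κ₂ j), ‖κ₂ j‖⁻¹ • κ₂ j⟫_ℂ‖) with hM
  have hA : ‖⟪A (κ₁ p.1), κ₁ p.1⟫_ℂ‖ ≤ a ^ 2 * M := by
    have h1 : ‖⟪A (a⁻¹ • κ₁ p.1), a⁻¹ • κ₁ p.1⟫_ℂ‖ ≤ M :=
      le_trans (le_ciSup (aux_bdd A κ₁ hκ₁) p.1) (le_max_left _ _)
    rw [aux_norm_inner_smul] at h1
    have := mul_le_mul_of_nonneg_left h1 (by positivity : (0:ℝ) ≤ a ^ 2)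
    calc ‖⟪A (κ₁ p.1), κ₁ p.1⟫_ℂ‖
        = a ^ 2 * ((a⁻¹) ^ 2 * ‖⟪A (κ₁ p.1), κ₁ p.1⟫_ℂ‖) := by
          field_simp
      _ ≤ a ^ 2 * M := this
  have hD : ‖⟪D (κ₂ p.2), κ₂ p.2⟫_ℂ‖ ≤ b ^ 2 * M := by
    have h1 : ‖⟪D (b⁻¹ • κ₂ p.2), b⁻¹ • κ₂ p.2⟫_ℂ‖ ≤ M :=
      le_trans (le_ciSup (aux_bdd D κ₂ hκ₂) p.2) (le_max_right _ _)
    rw [aux_norm_inner_smul] at h1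
    have := mul_le_mul_of_nonneg_left h1 (by positivity : (0:ℝ) ≤ b ^ 2)
    calc ‖⟪D (κ₂ p.2), κ₂ p.2⟫_ℂ‖
        = b ^ 2 * ((b⁻¹) ^ 2 * ‖⟪D (κ₂ p.2), κ₂ p.2⟫_ℂ‖) := by
          field_simp
      _ ≤ b ^ 2 * M := this
  calc ‖⟪A (s⁻¹ • κ₁ p.1), s⁻¹ • κ₁ p.1⟫_ℂ + ⟪D (s⁻¹ • κ₂ p.2), s⁻¹ • κ₂ p.2⟫_ℂ‖
      ≤ ‖⟪A (s⁻¹ • κ₁ p.1), s⁻¹ • κ₁ p.1⟫_ℂ‖ + ‖⟪D (s⁻¹ • κ₂ p.2), s⁻¹ • κ₂ p.2⟫_ℂ‖ :=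
        norm_add_le _ _
    _ = (s⁻¹) ^ 2 * ‖⟪A (κ₁ p.1), κ₁ p.1⟫_ℂ‖ + (s⁻¹) ^ 2 * ‖⟪D (κ₂ p.2), κ₂ p.2⟫_ℂ‖ := by
        rw [aux_norm_inner_smul, aux_norm_inner_smul]
    _ ≤ (s⁻¹) ^ 2 * (a ^ 2 * M) + (s⁻¹) ^ 2 * (b ^ 2 * M) := by
        gcongr
    _ = (s⁻¹) ^ 2 * (a ^ 2 + b ^ 2) * M := by ring
    _ = M := by
        rw [← hs2]
        field_simp
end

section
/- Let B ∈ B(H₂, H₁), C ∈ B(H₁, H₂) and T = [[0, B], [C, 0]] on H₁ ⊕ H₂. Then ber(T) ≤ (1/2)(‖B‖ + ‖C‖), where ber is the supremum of |⟨T k, k⟩| over normalized reproducing kernels of H₁ ⊕ H₂. -/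
open scoped InnerProductSpace
open ContinuousLinearMap Complex

variable {H₁ H₂ : Type*}
  [NormedAddCommGroup H₁] [InnerProductSpace ℂ H₁] [CompleteSpace H₁]
  [NormedAddCommGroup H₂] [InnerProductSpace ℂ H₂] [CompleteSpace H₂]

/-!
At a unit vector `(u, v)` of `H₁ ⊕ H₂` the Berezin symbol of `[[0, B], [C, 0]]` is
`⟪B v, u⟫ + ⟪C u, v⟫`, of modulus at most `(‖B‖ + ‖C‖) ‖u‖ ‖v‖` by Cauchy–Schwarz, and
`‖u‖ ‖v‖ ≤ (‖u‖² + ‖v‖²) / 2 = 1 / 2` by AM–GM.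
-/

theorem mul_le_half_of_sq_add_sq_le_one {a b : ℝ} (h : a ^ 2 + b ^ 2 ≤ 1) : a * b ≤ 1 / 2 := by
  nlinarith [two_mul_le_add_sq a b]

-- Only `≤ 1`: for `x = y = 0` the scalar is `(√0)⁻¹ = 0`.
theorem norm_sq_add_norm_sq_smul_inv_sqrt_le_one {E F : Type*} [SeminormedAddCommGroup E]
    [NormedSpace ℝ E] [SeminormedAddCommGroup F] [NormedSpace ℝ F] (x : E) (y : F) :
    ‖(√(‖x‖ ^ 2 + ‖y‖ ^ 2))⁻¹ • x‖ ^ 2 + ‖(√(‖x‖ ^ 2 + ‖y‖ ^ 2))⁻¹ • y‖ ^ 2 ≤ 1 := by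
  have hs : 0 ≤ ‖x‖ ^ 2 + ‖y‖ ^ 2 := by positivity
  simp only [norm_smul, norm_inv, Real.norm_eq_abs, abs_of_nonneg (Real.sqrt_nonneg _), mul_pow,
    inv_pow, Real.sq_sqrt hs, ← mul_add]
  exact inv_mul_le_one_of_le₀ le_rfl hs

section

variable {𝕜 E F : Type*} [RCLike 𝕜] [SeminormedAddCommGroup E] [InnerProductSpace 𝕜 E]
  [SeminormedAddCommGroup F] [InnerProductSpace 𝕜 F]

theorem ContinuousLinearMap.norm_inner_apply_le (A : E →L[𝕜] F) (x : E) (y : F) :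
    ‖⟪A x, y⟫_𝕜‖ ≤ ‖A‖ * (‖x‖ * ‖y‖) :=
  calc ‖⟪A x, y⟫_𝕜‖ ≤ ‖A x‖ * ‖y‖ := norm_inner_le_norm _ _
    _ ≤ ‖A‖ * ‖x‖ * ‖y‖ := by gcongr; exact A.le_opNorm x
    _ = ‖A‖ * (‖x‖ * ‖y‖) := mul_assoc _ _ _

theorem norm_inner_off_diagonal_le (B : F →L[𝕜] E) (C : E →L[𝕜] F) {u : E} {v : F}
    (huv : ‖u‖ ^ 2 + ‖v‖ ^ 2 ≤ 1) :
    ‖⟪B v, u⟫_𝕜 + ⟪C u, v⟫_𝕜‖ ≤ 1 / 2 * (‖B‖ + ‖C‖) :=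
  calc ‖⟪B v, u⟫_𝕜 + ⟪C u, v⟫_𝕜‖ ≤ ‖B‖ * (‖v‖ * ‖u‖) + ‖C‖ * (‖u‖ * ‖v‖) :=
        (norm_add_le _ _).trans
          (add_le_add (B.norm_inner_apply_le v u) (C.norm_inner_apply_le u v))
    _ = (‖B‖ + ‖C‖) * (‖u‖ * ‖v‖) := by ring
    _ ≤ (‖B‖ + ‖C‖) * (1 / 2) := by
        gcongr; exact mul_le_half_of_sq_add_sq_le_one huv
    _ = 1 / 2 * (‖B‖ + ‖C‖) := mul_comm _ _

end

theorem berezin_off_diagonal_norm_bound_general {ι₁ ι₂ : Type*}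
    (κ₁ : ι₁ → H₁) (κ₂ : ι₂ → H₂)
    (B : H₂ →L[ℂ] H₁) (C : H₁ →L[ℂ] H₂) :
    (⨆ p : ι₁ × ι₂,
        ‖⟪B ((Real.sqrt (‖κ₁ p.1‖ ^ 2 + ‖κ₂ p.2‖ ^ 2))⁻¹ • κ₂ p.2),
            (Real.sqrt (‖κ₁ p.1‖ ^ 2 + ‖κ₂ p.2‖ ^ 2))⁻¹ • κ₁ p.1⟫_ℂ +
          ⟪C ((Real.sqrt (‖κ₁ p.1‖ ^ 2 + ‖κ₂ p.2‖ ^ 2))⁻¹ • κ₁ p.1),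
            (Real.sqrt (‖κ₁ p.1‖ ^ 2 + ‖κ₂ p.2‖ ^ 2))⁻¹ • κ₂ p.2⟫_ℂ‖) ≤
      (1 / 2) * (‖B‖ + ‖C‖) :=
  Real.iSup_le (fun p => norm_inner_off_diagonal_le B C
      (norm_sq_add_norm_sq_smul_inv_sqrt_le_one (κ₁ p.1) (κ₂ p.2)))
    (by positivity)

/-- Berezin number bound for the off-diagonal operator `[[0, B], [C, 0]]` on `H₁ ⊕ H₂`:
its Berezin symbol at a normalized kernel `(u, v)` is `⟪B v, u⟫ + ⟪C u, v⟫`. -/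
theorem berezin_off_diagonal_norm_bound {ι₁ ι₂ : Type*}
    (κ₁ : ι₁ → H₁) (κ₂ : ι₂ → H₂) (hκ₁ : ∀ i, κ₁ i ≠ 0) (hκ₂ : ∀ j, κ₂ j ≠ 0)
    (B : H₂ →L[ℂ] H₁) (C : H₁ →L[ℂ] H₂) :
    (⨆ p : ι₁ × ι₂,
        ‖⟪B ((Real.sqrt (‖κ₁ p.1‖ ^ 2 + ‖κ₂ p.2‖ ^ 2))⁻¹ • κ₂ p.2),
            (Real.sqrt (‖κ₁ p.1‖ ^ 2 + ‖κ₂ p.2‖ ^ 2))⁻¹ • κ₁ p.1⟫_ℂ +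
          ⟪C ((Real.sqrt (‖κ₁ p.1‖ ^ 2 + ‖κ₂ p.2‖ ^ 2))⁻¹ • κ₁ p.1),
            (Real.sqrt (‖κ₁ p.1‖ ^ 2 + ‖κ₂ p.2‖ ^ 2))⁻¹ • κ₂ p.2⟫_ℂ‖) ≤
      (1 / 2) * (‖B‖ + ‖C‖) :=
  berezin_off_diagonal_norm_bound_general κ₁ κ₂ B C
end

section
/- Let T₁, …, Tₙ with Tᵢ = [[0, Bᵢ], [Cᵢ, 0]] be off-diagonal operator matrices on H₁ ⊕ H₂, let 0 ≤ α ≤ 1 and p ≥ 2. Then for every unit vector k in H₁ ⊕ H₂, Σᵢ |⟨Tᵢ k, k⟩|^p ≤ ⟨[[ Σᵢ (α|Cᵢ|^p + (1-α)|Bᵢ*|^p), 0], [0, Σᵢ (α|Bᵢ|^p + (1-α)|Cᵢ*|^p)]] k, k⟩. -/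
open scoped InnerProductSpace
open ContinuousLinearMap Complex

variable {H₁ H₂ : Type*}
  [NormedAddCommGroup H₁] [InnerProductSpace ℂ H₁] [CompleteSpace H₁]
  [NormedAddCommGroup H₂] [InnerProductSpace ℂ H₂] [CompleteSpace H₂]

/-! Write `z = ⟪B k₂, k₁⟫ + ⟪C k₁, k₂⟫`. Cauchy–Schwarz gives `‖z‖² ≤ ‖C k₁‖² + ‖B k₂‖²`, and
since `z` is the conjugate of the same expression for the pair `(C*, B*)`, also
`‖z‖² ≤ ‖B* k₁‖² + ‖C* k₂‖²`; so `‖z‖ ^ p` is below any convex combination of the two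
`p/2`-th powers. Each of these is bounded by the McCarthy-type inequality
`(‖T₁ x₁‖² + ‖T₂ x₂‖²) ^ (p/2) ≤ ⟪|T₁|^p x₁, x₁⟫ + ⟪|T₂|^p x₂, x₂⟫` for `‖x₁‖² + ‖x₂‖² = 1`:
as `|T|^p = (T*T)^(p/2)`, apply the functional calculus to the tangent line of the convex
function `t ↦ t ^ (p/2)` at `s = ‖T₁ x₁‖² + ‖T₂ x₂‖²` and add the two resulting inequalities. -/

lemma rpow_add_mul_sub_le_rpow {q s t : ℝ} (hq : 1 ≤ q) (hs : 0 ≤ s) (ht : 0 ≤ t) :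
    s ^ q + q * s ^ (q - 1) * (t - s) ≤ t ^ q := by
  rcases hs.eq_or_lt with rfl | hs
  · rcases hq.eq_or_lt with rfl | hq
    · simp
    rw [Real.zero_rpow (by linarith), Real.zero_rpow (by linarith)]
    simpa using Real.rpow_nonneg ht q
  · have h := mul_le_mul_of_nonneg_left
      (one_add_mul_self_le_rpow_one_add (s := t / s - 1) (by linarith [div_nonneg ht hs.le]) hq)
      (Real.rpow_nonneg hs.le q)
    rw [add_sub_cancel, Real.div_rpow ht hs.le, mul_div_cancel₀ _ (by positivity)] at h
    rw [Real.rpow_sub_one hs.ne' q]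
    refine Eq.trans_le ?_ h
    field_simp

section Operator

variable {E F : Type*} [NormedAddCommGroup E] [InnerProductSpace ℂ E] [CompleteSpace E]
  [NormedAddCommGroup F] [InnerProductSpace ℂ F] [CompleteSpace F]

lemma le_re_inner_cfc_of_affine_le {A : E →L[ℂ] E} (hA : IsSelfAdjoint A) {f : ℝ → ℝ}
    {a b : ℝ} (hf : ContinuousOn f (spectrum ℝ A)) (h : ∀ t ∈ spectrum ℝ A, a * t + b ≤ f t)
    (x : E) : a * (⟪A x, x⟫_ℂ).re + b * ‖x‖ ^ 2 ≤ (⟪cfc f A x, x⟫_ℂ).re := by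
  have hmono := cfc_mono h (by fun_prop) hf
  rw [cfc_add A (a * ·) (fun _ ↦ b), cfc_const_mul_id a A, cfc_const b A,
    Algebra.algebraMap_eq_smul_one, ContinuousLinearMap.le_def] at hmono
  have := hmono.re_inner_nonneg_left x
  simp only [sub_apply, add_apply, smul_apply, one_apply_eq_self, inner_sub_left,
    inner_add_left, inner_smul_left_eq_smul, RCLike.re_to_complex, Complex.sub_re,
    Complex.add_re, Complex.smul_re, smul_eq_mul, sub_nonneg] at this
  rwa [← inner_self_eq_norm_sq (𝕜 := ℂ)]

lemma adjoint_comp_self_nonneg (T : E →L[ℂ] F) : 0 ≤ adjoint T ∘L T :=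
  (nonneg_iff_isPositive _).mpr (isPositive_adjoint_comp_self T)

lemma opow_oabs_eq_cfc_adjoint_comp_self (T : E →L[ℂ] F) {p : ℝ} (hp : 0 < p) :
    opow (oabs T) p = cfc (fun t : ℝ ↦ t ^ (p / 2)) (adjoint T ∘L T) := by
  have hT := adjoint_comp_self_nonneg T
  rw [opow, oabs, ← cfc_comp' (fun t : ℝ ↦ t ^ p) Real.sqrt _
    (Real.continuous_rpow_const hp.le).continuousOn Real.continuous_sqrt.continuousOn]
  refine cfc_congr fun t ht ↦ ?_
  rw [Real.sqrt_eq_rpow, ← Real.rpow_mul (spectrum_nonneg_of_nonneg hT ht), one_div_mul_eq_div]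

lemma tangent_le_re_inner_opow_oabs (T : E →L[ℂ] F) {p s : ℝ} (hp : 2 ≤ p) (hs : 0 ≤ s)
    (x : E) :
    p / 2 * s ^ (p / 2 - 1) * ‖T x‖ ^ 2 +
        (s ^ (p / 2) - p / 2 * s ^ (p / 2 - 1) * s) * ‖x‖ ^ 2 ≤
      (⟪opow (oabs T) p x, x⟫_ℂ).re := by
  have hT := adjoint_comp_self_nonneg T
  rw [opow_oabs_eq_cfc_adjoint_comp_self T (by linarith), apply_norm_sq_eq_inner_adjoint_left]
  refine le_re_inner_cfc_of_affine_le hT.isSelfAdjoint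
    (Real.continuous_rpow_const (by linarith)).continuousOn (fun t ht ↦ ?_) x
  linarith [rpow_add_mul_sub_le_rpow (by linarith : 1 ≤ p / 2) hs
    (spectrum_nonneg_of_nonneg hT ht)]

end Operator

section Block

variable {E₁ E₂ F₁ F₂ : Type*}
  [NormedAddCommGroup E₁] [InnerProductSpace ℂ E₁] [CompleteSpace E₁]
  [NormedAddCommGroup E₂] [InnerProductSpace ℂ E₂] [CompleteSpace E₂]
  [NormedAddCommGroup F₁] [InnerProductSpace ℂ F₁] [CompleteSpace F₁]
  [NormedAddCommGroup F₂] [InnerProductSpace ℂ F₂] [CompleteSpace F₂]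

lemma rpow_sq_norm_add_sq_norm_le (T₁ : E₁ →L[ℂ] F₁) (T₂ : E₂ →L[ℂ] F₂) {p : ℝ} (hp : 2 ≤ p)
    {x₁ : E₁} {x₂ : E₂} (hx : ‖x₁‖ ^ 2 + ‖x₂‖ ^ 2 = 1) :
    (‖T₁ x₁‖ ^ 2 + ‖T₂ x₂‖ ^ 2) ^ (p / 2) ≤
      (⟪opow (oabs T₁) p x₁, x₁⟫_ℂ).re + (⟪opow (oabs T₂) p x₂, x₂⟫_ℂ).re := by
  set s := ‖T₁ x₁‖ ^ 2 + ‖T₂ x₂‖ ^ 2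
  have hs : 0 ≤ s := by positivity
  have h₁ := tangent_le_re_inner_opow_oabs T₁ hp hs x₁
  have h₂ := tangent_le_re_inner_opow_oabs T₂ hp hs x₂
  calc s ^ (p / 2) = p / 2 * s ^ (p / 2 - 1) * s +
        (s ^ (p / 2) - p / 2 * s ^ (p / 2 - 1) * s) * (‖x₁‖ ^ 2 + ‖x₂‖ ^ 2) := by
        rw [hx]; ring
    _ ≤ _ := by linarith

end Block

section Inner

variable {E F : Type*} [NormedAddCommGroup E] [InnerProductSpace ℂ E]
  [NormedAddCommGroup F] [InnerProductSpace ℂ F]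

lemma sq_norm_inner_add_inner_le (B : F →L[ℂ] E) (C : E →L[ℂ] F) {x : E} {y : F}
    (hxy : ‖x‖ ^ 2 + ‖y‖ ^ 2 = 1) :
    ‖⟪B y, x⟫_ℂ + ⟪C x, y⟫_ℂ‖ ^ 2 ≤ ‖C x‖ ^ 2 + ‖B y‖ ^ 2 := by
  have hz : ‖⟪B y, x⟫_ℂ + ⟪C x, y⟫_ℂ‖ ≤ ‖B y‖ * ‖x‖ + ‖C x‖ * ‖y‖ :=
    (norm_add_le _ _).trans (add_le_add (norm_inner_le_norm _ _) (norm_inner_le_norm _ _))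
  calc ‖⟪B y, x⟫_ℂ + ⟪C x, y⟫_ℂ‖ ^ 2 ≤ (‖B y‖ * ‖x‖ + ‖C x‖ * ‖y‖) ^ 2 := by gcongr
    _ ≤ (‖C x‖ ^ 2 + ‖B y‖ ^ 2) * (‖x‖ ^ 2 + ‖y‖ ^ 2) := by
      nlinarith [sq_nonneg (‖B y‖ * ‖y‖ - ‖C x‖ * ‖x‖)]
    _ = ‖C x‖ ^ 2 + ‖B y‖ ^ 2 := by rw [hxy, mul_one]

variable [CompleteSpace E] [CompleteSpace F]

lemma norm_inner_add_inner_eq_adjoint (B : F →L[ℂ] E) (C : E →L[ℂ] F) (x : E) (y : F) :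
    ‖⟪B y, x⟫_ℂ + ⟪C x, y⟫_ℂ‖ = ‖⟪adjoint C y, x⟫_ℂ + ⟪adjoint B x, y⟫_ℂ‖ := by
  rw [adjoint_inner_left, adjoint_inner_left, ← inner_conj_symm y, ← inner_conj_symm x,
    ← map_add, RCLike.norm_conj, add_comm]

end Inner

lemma norm_inner_add_inner_rpow_le (B : H₂ →L[ℂ] H₁) (C : H₁ →L[ℂ] H₂) {α p : ℝ}
    (hα0 : 0 ≤ α) (hα1 : α ≤ 1) (hp : 2 ≤ p) {k₁ : H₁} {k₂ : H₂}
    (hk : ‖k₁‖ ^ 2 + ‖k₂‖ ^ 2 = 1) :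
    ‖⟪B k₂, k₁⟫_ℂ + ⟪C k₁, k₂⟫_ℂ‖ ^ p ≤
      α * ((⟪opow (oabs C) p k₁, k₁⟫_ℂ).re + (⟪opow (oabs B) p k₂, k₂⟫_ℂ).re) +
      (1 - α) * ((⟪opow (oabs (adjoint B)) p k₁, k₁⟫_ℂ).re +
        (⟪opow (oabs (adjoint C)) p k₂, k₂⟫_ℂ).re) := by
  set z := ⟪B k₂, k₁⟫_ℂ + ⟪C k₁, k₂⟫_ℂ
  have hzp : ‖z‖ ^ p = (‖z‖ ^ 2) ^ (p / 2) := by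
    rw [← Real.rpow_natCast, ← Real.rpow_mul (norm_nonneg z), Nat.cast_ofNat,
      mul_div_cancel₀ p two_ne_zero]
  have h₁ : ‖z‖ ^ p ≤ (⟪opow (oabs C) p k₁, k₁⟫_ℂ).re + (⟪opow (oabs B) p k₂, k₂⟫_ℂ).re := by
    rw [hzp]
    exact (Real.rpow_le_rpow (sq_nonneg _) (sq_norm_inner_add_inner_le B C hk)
      (by linarith)).trans (rpow_sq_norm_add_sq_norm_le C B hp hk)
  have h₂ : ‖z‖ ^ p ≤ (⟪opow (oabs (adjoint B)) p k₁, k₁⟫_ℂ).re +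
      (⟪opow (oabs (adjoint C)) p k₂, k₂⟫_ℂ).re := by
    rw [hzp, norm_inner_add_inner_eq_adjoint]
    exact (Real.rpow_le_rpow (sq_nonneg _) (sq_norm_inner_add_inner_le _ _ hk)
      (by linarith)).trans (rpow_sq_norm_add_sq_norm_le _ _ hp hk)
  calc ‖z‖ ^ p = α * ‖z‖ ^ p + (1 - α) * ‖z‖ ^ p := by ring
    _ ≤ _ := add_le_add (mul_le_mul_of_nonneg_left h₁ hα0)
      (mul_le_mul_of_nonneg_left h₂ (sub_nonneg.2 hα1))

theorem berezin_euclidean_off_diagonal {n : ℕ}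
    (B : Fin n → (H₂ →L[ℂ] H₁)) (C : Fin n → (H₁ →L[ℂ] H₂))
    (α p : ℝ) (hα0 : 0 ≤ α) (hα1 : α ≤ 1) (hp : 2 ≤ p)
    (k₁ : H₁) (k₂ : H₂) (hk : ‖k₁‖ ^ 2 + ‖k₂‖ ^ 2 = 1) :
    ∑ i, ‖⟪B i k₂, k₁⟫_ℂ + ⟪C i k₁, k₂⟫_ℂ‖ ^ p ≤
      (⟪(∑ i, (α • opow (oabs (C i)) p +
          (1 - α) • opow (oabs (ContinuousLinearMap.adjoint (B i))) p)) k₁, k₁⟫_ℂ).re +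
      (⟪(∑ i, (α • opow (oabs (B i)) p +
          (1 - α) • opow (oabs (ContinuousLinearMap.adjoint (C i))) p)) k₂, k₂⟫_ℂ).re := by
  simp only [sum_apply, add_apply, smul_apply, sum_inner, inner_add_left,
    inner_smul_left_eq_smul, Complex.re_sum, Complex.add_re, Complex.smul_re, smul_eq_mul,
    ← Finset.sum_add_distrib]
  refine Finset.sum_le_sum fun i _ ↦
    (norm_inner_add_inner_rpow_le (B i) (C i) hα0 hα1 hp hk).trans_eq ?_
  ring
end

section
/- Let T = [[A, 0], [0, D]] be a block-diagonal operator on H₁ ⊕ H₂ and r ≥ 1. Then for every unit vector k in H₁ ⊕ H₂, |⟨T k, k⟩|^r ≤ ⟨[[ (1/2)(|A|^r + |A*|^r), 0], [0, (1/2)(|D|^r + |D*|^r)]] k, k⟩. -/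
/-!
By the mixed Schwarz inequality, `|⟨A x, x⟩|² ≤ ⟨|A| x, x⟩ ⟨|A*| x, x⟩`, so with
`u = ⟨|A| k₁, k₁⟩ + ⟨|D| k₂, k₂⟩` and `v = ⟨|A*| k₁, k₁⟩ + ⟨|D*| k₂, k₂⟩` the triangle and
Cauchy–Schwarz inequalities give `|⟨T k, k⟩|² ≤ u v`, and AM–GM gives
`|⟨T k, k⟩|^r ≤ (u^r + v^r) / 2`. McCarthy's inequality `⟨P k, k⟩^r ≤ ⟨P^r k, k⟩` for the
positive operator `P = |A| ⊕ |D|` (resp. `|A*| ⊕ |D*|`) and the unit vector `k = (k₁, k₂)`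
bounds `u^r` and `v^r`; it follows from the tangent-line inequality for `t ↦ t^r` at `u`.

The mixed Schwarz inequality is proved with `|A| + ε` in place of `|A|`: writing
`A = A (|A| + ε)⁻¹ (|A| + ε)` and using `A f(A*A) = f(AA*) A` reduces it to the Cauchy–Schwarz
inequality for the positive operator `(|A| + ε)⁻¹`.
-/

open scoped InnerProductSpace
open ContinuousLinearMap Complex

variable {H₁ H₂ : Type*}
  [NormedAddCommGroup H₁] [InnerProductSpace ℂ H₁] [CompleteSpace H₁]
  [NormedAddCommGroup H₂] [InnerProductSpace ℂ H₂] [CompleteSpace H₂]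

section CFC

variable {A : Type*} [Ring A] [StarRing A] [Algebra ℝ A] [TopologicalSpace A]
  [ContinuousFunctionalCalculus ℝ A IsSelfAdjoint] [IsTopologicalRing A] [T2Space A]

theorem SemiconjBy.cfc_real {x b c : A} (h : SemiconjBy x b c) (hb : IsSelfAdjoint b)
    (hc : IsSelfAdjoint c) {f : ℝ → ℝ} (hf : Continuous f) :
    SemiconjBy x (cfc f b) (cfc f c) := by
  set K := spectrum ℝ b ∪ spectrum ℝ c
  have : CompactSpace K := isCompact_iff_compactSpace.mp
    ((ContinuousFunctionalCalculus.isCompact_spectrum b).union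
      (ContinuousFunctionalCalculus.isCompact_spectrum c))
  let ιb : C(spectrum ℝ b, K) := ⟨Set.inclusion Set.subset_union_left, by fun_prop⟩
  let ιc : C(spectrum ℝ c, K) := ⟨Set.inclusion Set.subset_union_right, by fun_prop⟩
  suffices key : ∀ g : C(K, ℝ), SemiconjBy x (cfcHom hb (g.comp ιb)) (cfcHom hc (g.comp ιc)) by
    rw [cfc_apply f b hb hf.continuousOn, cfc_apply f c hc hf.continuousOn]
    exact key ((ContinuousMap.mk f hf).restrict K)
  intro g
  induction g using ContinuousMap.induction_on_of_compact with
  | const r =>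
    change SemiconjBy x (cfcHom hb (algebraMap ℝ _ r)) (cfcHom hc (algebraMap ℝ _ r))
    rw [AlgHomClass.commutes, AlgHomClass.commutes]
    exact Algebra.commute_algebraMap_right r x
  | id => convert h using 1 <;> exact cfcHom_id _
  | star_id => convert h using 1 <;> exact cfcHom_id _
  | add f g hf hg => simpa only [ContinuousMap.add_comp, map_add] using hf.add_right hg
  | mul f g hf hg => simpa only [ContinuousMap.mul_comp, map_mul] using hf.mul_right hg
  | frequently g hg =>
    have hclosed : IsClosed {g : C(K, ℝ) |
        SemiconjBy x (cfcHom hb (g.comp ιb)) (cfcHom hc (g.comp ιc))} :=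
      isClosed_eq (by fun_prop) (by fun_prop)
    exact hclosed.mem_of_frequently_of_tendsto hg Filter.tendsto_id

section InnerProduct

variable {E : Type*} [NormedAddCommGroup E] [InnerProductSpace ℂ E]

theorem re_inner_le_of_le {S T : E →L[ℂ] E} (h : S ≤ T) (x : E) :
    (⟪S x, x⟫_ℂ).re ≤ (⟪T x, x⟫_ℂ).re := by
  have := ((le_def S T).mp h).re_inner_nonneg_left x
  rwa [sub_apply, inner_sub_left, map_sub, sub_nonneg] at this

theorem re_inner_nonneg_of_nonneg {P : E →L[ℂ] E} (hP : 0 ≤ P) (x : E) :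
    0 ≤ (⟪P x, x⟫_ℂ).re := by
  simpa using re_inner_le_of_le hP x

theorem re_inner_algebraMap_apply (c : ℝ) (x : E) :
    (⟪algebraMap ℝ (E →L[ℂ] E) c x, x⟫_ℂ).re = c * ‖x‖ ^ 2 := by
  simp [Algebra.algebraMap_eq_smul_one, inner_self_eq_norm_sq_to_K, ← ofReal_pow]

theorem re_inner_real_smul_apply (c : ℝ) (S : E →L[ℂ] E) (x : E) :
    (⟪(c • S) x, x⟫_ℂ).re = c * (⟪S x, x⟫_ℂ).re := by
  rw [smul_apply, RCLike.real_smul_eq_coe_smul (K := ℂ), inner_smul_real_left, real_smul,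
    re_ofReal_mul]

theorem re_inner_self (u : E) : (⟪u, u⟫_ℂ).re = ‖u‖ ^ 2 := by
  simpa using (InnerProductSpace.norm_sq_eq_re_inner (𝕜 := ℂ) u).symm

variable [CompleteSpace E]

theorem norm_inner_sq_le_of_nonneg {P : E →L[ℂ] E} (hP : 0 ≤ P) (y z : E) :
    ‖⟪P y, z⟫_ℂ‖ ^ 2 ≤ (⟪P y, y⟫_ℂ).re * (⟪P z, z⟫_ℂ).re := by
  set S := CFC.sqrt P
  have hS : IsSelfAdjoint S := (CFC.sqrt_nonneg P).isSelfAdjoint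
  have hP_eq : ∀ u v : E, ⟪P u, v⟫_ℂ = ⟪S u, S v⟫_ℂ := fun u v => by
    rw [← CFC.sqrt_mul_sqrt_self P hP, mul_apply_eq_comp, ← adjoint_inner_right, ← star_eq_adjoint,
      hS.star_eq]
  rw [hP_eq, hP_eq, hP_eq, re_inner_self, re_inner_self, ← mul_pow]
  exact pow_le_pow_left₀ (norm_nonneg _) (norm_inner_le_norm _ _) 2

theorem oabs_nonneg (a : E →L[ℂ] E) : 0 ≤ oabs a :=
  cfc_nonneg fun t _ => Real.sqrt_nonneg t

theorem oabs_adjoint (a : E →L[ℂ] E) : oabs (adjoint a) = cfc Real.sqrt (a * star a) := by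
  rw [oabs, adjoint_adjoint]
  rfl

theorem norm_inner_apply_self_sq_le_add_mul (a : E →L[ℂ] E) (x : E) {ε : ℝ} (hε : 0 < ε) :
    ‖⟪a x, x⟫_ℂ‖ ^ 2 ≤
      ((⟪oabs a x, x⟫_ℂ).re + ε * ‖x‖ ^ 2) * (⟪oabs (adjoint a) x, x⟫_ℂ).re := by
  have hp : IsSelfAdjoint (star a * a) := .star_mul_self a
  have hpos : ∀ t, 0 < √t + ε := fun t => by positivity
  have hh : Continuous fun t => (√t + ε)⁻¹ := by
    have : Continuous fun t => √t + ε := by fun_prop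
    exact this.inv₀ fun t => (hpos t).ne'
  set G := cfc (fun t => √t + ε) (star a * a) with hG_def
  set H := cfc (fun t => (√t + ε)⁻¹) (star a * a) with hH_def
  have hHG : H * G = 1 := by
    rw [hH_def, hG_def, ← cfc_mul _ _ _ hh.continuousOn, ← cfc_one ℝ (star a * a)]
    exact cfc_congr fun t _ => inv_mul_cancel₀ (hpos t).ne'
  have hG : G = oabs a + algebraMap ℝ _ ε := by
    rw [hG_def, cfc_add (a := star a * a) Real.sqrt (fun _ => ε), cfc_const ε (star a * a)]
    rfl
  have hGsa : IsSelfAdjoint G := cfc_predicate (fun t => √t + ε) (star a * a)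
  have hH : 0 ≤ H := cfc_nonneg fun t _ => (inv_pos.mpr (hpos t)).le
  have hinner : ⟪a x, x⟫_ℂ = ⟪H (G x), adjoint a x⟫_ℂ := by
    rw [adjoint_inner_right, ← mul_apply_eq_comp H, hHG, one_apply_eq_self]
  have hleft : (⟪H (G x), G x⟫_ℂ).re = (⟪oabs a x, x⟫_ℂ).re + ε * ‖x‖ ^ 2 := by
    rw [← adjoint_inner_left, ← star_eq_adjoint, hGsa.star_eq, ← mul_apply_eq_comp H G x, hHG,
      one_apply_eq_self, hG, add_apply, inner_add_left, add_re, re_inner_algebraMap_apply]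
  -- `H` is moved across `a` by `a (a† a) = (a a†) a`, and `t / (√t + ε) ≤ √t`
  have hright : (⟪H (adjoint a x), adjoint a x⟫_ℂ).re ≤ (⟪oabs (adjoint a) x, x⟫_ℂ).re := by
    have haHa : a * H * star a = cfc (fun t => (√t + ε)⁻¹ * t) (a * star a) := by
      rw [(SemiconjBy.cfc_real (mul_assoc a (star a) a).symm hp (.mul_star_self a) hh).eq,
        mul_assoc, cfc_mul _ _ _ hh.continuousOn, cfc_id' ℝ (a * star a)]
    have hmono : cfc (fun t => (√t + ε)⁻¹ * t) (a * star a) ≤ cfc Real.sqrt (a * star a) := by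
      refine cfc_mono (fun t ht => ?_) (hh.mul continuous_id).continuousOn
      have ht0 : 0 ≤ t := spectrum_nonneg_of_nonneg (mul_star_self_nonneg a) ht
      rw [inv_mul_le_iff₀ (hpos t)]
      nlinarith [Real.sqrt_nonneg t, Real.mul_self_sqrt ht0]
    rw [adjoint_inner_right, oabs_adjoint, ← star_eq_adjoint,
      show a (H (star a x)) = (a * H * star a) x from rfl, haHa]
    exact re_inner_le_of_le hmono x
  calc ‖⟪a x, x⟫_ℂ‖ ^ 2 = ‖⟪H (G x), adjoint a x⟫_ℂ‖ ^ 2 := by rw [hinner]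
    _ ≤ (⟪H (G x), G x⟫_ℂ).re * (⟪H (adjoint a x), adjoint a x⟫_ℂ).re :=
      norm_inner_sq_le_of_nonneg hH _ _
    _ ≤ _ := by
      rw [hleft]
      exact mul_le_mul_of_nonneg_left hright (hleft ▸ re_inner_nonneg_of_nonneg hH (G x))

theorem norm_inner_apply_self_sq_le (a : E →L[ℂ] E) (x : E) :
    ‖⟪a x, x⟫_ℂ‖ ^ 2 ≤ (⟪oabs a x, x⟫_ℂ).re * (⟪oabs (adjoint a) x, x⟫_ℂ).re := by
  set α := (⟪oabs a x, x⟫_ℂ).re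
  set β := (⟪oabs (adjoint a) x, x⟫_ℂ).re
  have hlim : Filter.Tendsto (fun ε : ℝ => (α + ε * ‖x‖ ^ 2) * β) (nhdsWithin 0 (Set.Ioi 0))
      (nhds (α * β)) := by
    have : Continuous fun ε : ℝ => (α + ε * ‖x‖ ^ 2) * β := by fun_prop
    simpa using (this.tendsto 0).mono_left nhdsWithin_le_nhds
  exact ge_of_tendsto hlim (eventually_nhdsWithin_of_forall fun ε hε =>
    norm_inner_apply_self_sq_le_add_mul a x hε)

end InnerProduct

theorem rpow_add_mul_sub_le_rpow_s18 {r c t : ℝ} (hr : 1 ≤ r) (hc : 0 ≤ c) (ht : 0 ≤ t) :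
    c ^ r + r * c ^ (r - 1) * (t - c) ≤ t ^ r := by
  rcases hc.eq_or_lt with rfl | hc
  · rcases hr.eq_or_lt with rfl | hr
    · simp
    · simp [Real.zero_rpow (by linarith : r ≠ 0), Real.zero_rpow (by linarith : r - 1 ≠ 0),
        Real.rpow_nonneg ht r]
  · have hbern := one_add_mul_self_le_rpow_one_add (by linarith [div_nonneg ht hc.le] :
      -1 ≤ t / c - 1) hr
    rw [add_sub_cancel, Real.div_rpow ht hc.le, le_div_iff₀ (Real.rpow_pos_of_pos hc r)] at hbern
    have hcr : c ^ r = c ^ (r - 1) * c := by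
      rw [← Real.rpow_add_one hc.ne', sub_add_cancel]
    calc c ^ r + r * c ^ (r - 1) * (t - c) = (1 + r * (t / c - 1)) * c ^ r := by
          rw [hcr]; field_simp
      _ ≤ t ^ r := hbern

section McCarthy

variable {E : Type*} [NormedAddCommGroup E] [InnerProductSpace ℂ E] [CompleteSpace E]

theorem add_mul_re_inner_sub_le_re_inner_opow {S : E →L[ℂ] E} (hS : 0 ≤ S) {r c : ℝ}
    (hr : 1 ≤ r) (hc : 0 ≤ c) (x : E) :
    c ^ r * ‖x‖ ^ 2 + r * c ^ (r - 1) * ((⟪S x, x⟫_ℂ).re - c * ‖x‖ ^ 2) ≤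
      (⟪opow S r x, x⟫_ℂ).re := by
  have htangent : algebraMap ℝ _ (c ^ r - r * c ^ (r - 1) * c) + (r * c ^ (r - 1)) • S ≤
      opow S r := by
    rw [← cfc_const _ S, ← cfc_const_mul_id _ S, ← cfc_add (a := S) _ _ continuousOn_const
      (continuous_const_mul _).continuousOn, opow]
    refine cfc_mono (fun t ht => ?_) (by fun_prop)
      (Real.continuous_rpow_const (by linarith)).continuousOn
    linarith [rpow_add_mul_sub_le_rpow_s18 hr hc (spectrum_nonneg_of_nonneg hS ht)]
  have := re_inner_le_of_le htangent x
  rw [add_apply, inner_add_left, add_re, re_inner_algebraMap_apply, re_inner_real_smul_apply]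
    at this
  linarith

theorem rpow_re_inner_add_re_inner_le {F : Type*} [NormedAddCommGroup F] [InnerProductSpace ℂ F]
    [CompleteSpace F] {S : E →L[ℂ] E} {T : F →L[ℂ] F} (hS : 0 ≤ S) (hT : 0 ≤ T) {r : ℝ}
    (hr : 1 ≤ r) {x : E} {y : F} (hxy : ‖x‖ ^ 2 + ‖y‖ ^ 2 = 1) :
    ((⟪S x, x⟫_ℂ).re + (⟪T y, y⟫_ℂ).re) ^ r ≤ (⟪opow S r x, x⟫_ℂ).re + (⟪opow T r y, y⟫_ℂ).re := by
  set c := (⟪S x, x⟫_ℂ).re + (⟪T y, y⟫_ℂ).re with hc_def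
  have hc : 0 ≤ c := add_nonneg (re_inner_nonneg_of_nonneg hS x) (re_inner_nonneg_of_nonneg hT y)
  have hSx := add_mul_re_inner_sub_le_re_inner_opow hS hr hc x
  have hTy := add_mul_re_inner_sub_le_re_inner_opow hT hr hc y
  -- the two tangent-line bounds at the common point `c` add up to `c ^ r`
  linear_combination (r * c ^ (r - 1) * c - c ^ r) * hxy + r * c ^ (r - 1) * hc_def + hSx + hTy

end McCarthy

theorem norm_add_sq_le_mul_of_norm_sq_le {G : Type*} [SeminormedAddGroup G] {z₁ z₂ : G}
    {a₁ a₂ b₁ b₂ : ℝ} (ha₁ : 0 ≤ a₁) (ha₂ : 0 ≤ a₂) (hb₁ : 0 ≤ b₁) (hb₂ : 0 ≤ b₂)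
    (h₁ : ‖z₁‖ ^ 2 ≤ a₁ * b₁) (h₂ : ‖z₂‖ ^ 2 ≤ a₂ * b₂) :
    ‖z₁ + z₂‖ ^ 2 ≤ (a₁ + a₂) * (b₁ + b₂) := by
  have hcross : 2 * (‖z₁‖ * ‖z₂‖) ≤ a₁ * b₂ + a₂ * b₁ := by
    have : (‖z₁‖ * ‖z₂‖) ^ 2 ≤ (a₁ * b₂) * (a₂ * b₁) := by
      rw [mul_pow]
      nlinarith [mul_le_mul h₁ h₂ (sq_nonneg _) (by positivity)]
    nlinarith [sq_nonneg (a₁ * b₂ - a₂ * b₁), mul_nonneg (norm_nonneg z₁) (norm_nonneg z₂),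
      mul_nonneg ha₁ hb₂, mul_nonneg ha₂ hb₁]
  nlinarith [norm_add_le z₁ z₂, norm_nonneg (z₁ + z₂)]

theorem rpow_le_add_div_two_of_sq_le_mul {x u v r : ℝ} (hx : 0 ≤ x) (hu : 0 ≤ u) (hv : 0 ≤ v)
    (hr : 0 ≤ r) (h : x ^ 2 ≤ u * v) : x ^ r ≤ (u ^ r + v ^ r) / 2 := by
  have hur := Real.rpow_nonneg hu r
  have hvr := Real.rpow_nonneg hv r
  refine (pow_le_pow_iff_left₀ (Real.rpow_nonneg hx r) (by positivity) two_ne_zero).mp ?_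
  calc (x ^ r) ^ 2 = (x ^ 2) ^ r := by
        rw [← Real.rpow_natCast, ← Real.rpow_natCast, ← Real.rpow_mul hx, ← Real.rpow_mul hx,
          mul_comm]
    _ ≤ (u * v) ^ r := Real.rpow_le_rpow (sq_nonneg x) h hr
    _ = u ^ r * v ^ r := Real.mul_rpow hu hv
    _ ≤ ((u ^ r + v ^ r) / 2) ^ 2 := by nlinarith [sq_nonneg (u ^ r - v ^ r)]

theorem berezin_block_diagonal_power (A : H₁ →L[ℂ] H₁) (D : H₂ →L[ℂ] H₂)
    (r : ℝ) (hr : 1 ≤ r)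
    (k₁ : H₁) (k₂ : H₂) (hk : ‖k₁‖ ^ 2 + ‖k₂‖ ^ 2 = 1) :
    ‖⟪A k₁, k₁⟫_ℂ + ⟪D k₂, k₂⟫_ℂ‖ ^ r ≤
      (⟪((1 / 2 : ℝ) • (opow (oabs A) r +
          opow (oabs (ContinuousLinearMap.adjoint A)) r)) k₁, k₁⟫_ℂ).re +
      (⟪((1 / 2 : ℝ) • (opow (oabs D) r +
          opow (oabs (ContinuousLinearMap.adjoint D)) r)) k₂, k₂⟫_ℂ).re := by
  have hα₁ := re_inner_nonneg_of_nonneg (oabs_nonneg A) k₁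
  have hα₂ := re_inner_nonneg_of_nonneg (oabs_nonneg D) k₂
  have hβ₁ := re_inner_nonneg_of_nonneg (oabs_nonneg (adjoint A)) k₁
  have hβ₂ := re_inner_nonneg_of_nonneg (oabs_nonneg (adjoint D)) k₂
  have hsq := norm_add_sq_le_mul_of_norm_sq_le hα₁ hα₂ hβ₁ hβ₂
    (norm_inner_apply_self_sq_le A k₁) (norm_inner_apply_self_sq_le D k₂)
  have hamgm := rpow_le_add_div_two_of_sq_le_mul (norm_nonneg _) (add_nonneg hα₁ hα₂)
    (add_nonneg hβ₁ hβ₂) (by linarith : (0 : ℝ) ≤ r) hsq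
  have hu := rpow_re_inner_add_re_inner_le (oabs_nonneg A) (oabs_nonneg D) hr hk
  have hv := rpow_re_inner_add_re_inner_le (oabs_nonneg (adjoint A)) (oabs_nonneg (adjoint D))
    hr hk
  rw [re_inner_real_smul_apply, re_inner_real_smul_apply, add_apply, add_apply, inner_add_left,
    inner_add_left, add_re, add_re]
  linarith
end CFC
end
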